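/- Let γ be a nonnegative random variable with continuous distribution and let γ_e ≥ 0 be independent of γ with Pr[γ_e < γ] > 0. Then there exist a threshold τ > 0 and a power P > 0 such that Pr[γ ≥ τ] · E[{log((1+τP)/(1+γ_e P))}^+] > 0; i.e., a 1-bit feedback scheme achieves a strictly positive secrecy rate. -/

import Mathlib

open MeasureTheory ProbabilityTheory

/-!
Since `{γe < γ}` is the countable union over rationals `q` of `{γe < q < γ}`, one of these
sets has positive mass; take `τ = q` and `P = 1`. Then `Pr[γ ≥ τ] > 0`, and the integrand
`{log((1+τP)/(1+γe P))}^+` is bounded by `log(1+τP)` and strictly positive on `{γe < τ}`,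
an event of positive probability, so its expectation is positive.
-/

theorem exists_measure_lt_and_lt_pos {Ω : Type*} [MeasurableSpace Ω] {μ : Measure Ω}
    {f g : Ω → ℝ} (h : 0 < μ {ω | f ω < g ω}) :
    ∃ τ : ℝ, 0 < μ {ω | f ω < τ ∧ τ < g ω} := by
  by_contra! hnull
  have hsub : {ω | f ω < g ω} ⊆ ⋃ q : ℚ, {ω | f ω < q ∧ (q : ℝ) < g ω} := fun ω hω ↦
    Set.mem_iUnion.mpr (exists_rat_btwn hω)
  exact h.ne' <| measure_mono_null hsub <|
    measure_iUnion_null fun q ↦ nonpos_iff_eq_zero.mp (hnull q)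

section LogRatio

variable {τ P x : ℝ}

theorem max_zero_log_div_le (hτ : 0 ≤ τ) (hP : 0 ≤ P) (hx : 0 ≤ x) :
    max 0 (Real.log ((1 + τ * P) / (1 + x * P))) ≤ Real.log (1 + τ * P) := by
  have hden : 0 < 1 + x * P := by positivity
  refine max_le (Real.log_nonneg (by nlinarith)) (Real.log_le_log (by positivity) ?_)
  rw [div_le_iff₀ hden]
  nlinarith [mul_nonneg hx hP, mul_nonneg hτ hP]

theorem max_zero_log_div_pos (hP : 0 < P) (hx : 0 ≤ x) (hxτ : x < τ) :
    0 < max 0 (Real.log ((1 + τ * P) / (1 + x * P))) := by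
  have hden : 0 < 1 + x * P := by positivity
  refine lt_max_of_lt_right (Real.log_pos ?_)
  rw [lt_div_iff₀ hden]
  nlinarith [mul_lt_mul_of_pos_right hxτ hP]

end LogRatio

theorem integral_max_zero_log_div_pos {Ω : Type*} [MeasurableSpace Ω] {μ : Measure Ω}
    [IsFiniteMeasure μ] {X : Ω → ℝ} (hXm : Measurable X) (hX0 : ∀ ω, 0 ≤ X ω)
    {τ P : ℝ} (hP : 0 < P) (hlt : 0 < μ {ω | X ω < τ}) :
    0 < ∫ ω, max 0 (Real.log ((1 + τ * P) / (1 + X ω * P))) ∂μ := by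
  obtain ⟨ω₀, hω₀⟩ := nonempty_of_measure_ne_zero hlt.ne'
  have hτ0 : 0 ≤ τ := (hX0 ω₀).trans (le_of_lt hω₀)
  set F : Ω → ℝ := fun ω ↦ max 0 (Real.log ((1 + τ * P) / (1 + X ω * P)))
  have hFm : Measurable F := measurable_const.max <| Real.measurable_log.comp <|
    (measurable_const.add (hXm.mul measurable_const)).const_div _
  have hF0 : 0 ≤ F := fun ω ↦ le_max_left _ _
  have hFint : Integrable F μ := by
    refine .of_bound hFm.aestronglyMeasurable (Real.log (1 + τ * P)) (.of_forall fun ω ↦ ?_)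
    rw [Real.norm_of_nonneg (hF0 ω)]
    exact max_zero_log_div_le hτ0 hP.le (hX0 ω)
  have hsupp : {ω | X ω < τ} ⊆ Function.support F := fun ω hω ↦
    (max_zero_log_div_pos hP (hX0 ω) hω).ne'
  rw [integral_pos_iff_support_of_nonneg hF0 hFint]
  exact hlt.trans_le (measure_mono hsupp)

theorem stmt_11_general {Ω : Type*} [MeasurableSpace Ω] (μ : Measure Ω) [IsProbabilityMeasure μ]
    (γ γe : Ω → ℝ) (hγem : Measurable γe)
    (hγe0 : ∀ ω, 0 ≤ γe ω)
    (hpos : 0 < μ {ω | γe ω < γ ω}) :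
    ∃ τ > (0 : ℝ), ∃ P > (0 : ℝ),
      0 < (μ {ω | τ ≤ γ ω}).toReal *
        ∫ ω, max 0 (Real.log ((1 + τ * P) / (1 + γe ω * P))) ∂μ := by
  obtain ⟨τ, hτ⟩ := exists_measure_lt_and_lt_pos hpos
  obtain ⟨ω₀, hω₀, -⟩ := nonempty_of_measure_ne_zero hτ.ne'
  have hγτ : 0 < μ {ω | τ ≤ γ ω} := hτ.trans_le (measure_mono fun ω hω ↦ le_of_lt hω.2)
  have hγeτ : 0 < μ {ω | γe ω < τ} := hτ.trans_le (measure_mono fun ω hω ↦ hω.1)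
  refine ⟨τ, (hγe0 ω₀).trans_lt hω₀, 1, one_pos, mul_pos ?_ ?_⟩
  · exact ENNReal.toReal_pos hγτ.ne' (measure_ne_top _ _)
  · exact integral_max_zero_log_div_pos hγem hγe0 one_pos hγeτ

/-- Let `γ` be a nonnegative random variable with continuous
(atomless) distribution and `γe ≥ 0` independent of `γ` with
`Pr[γe < γ] > 0`.  Then there exist a threshold `τ > 0` and a power `P > 0`
such that `Pr[γ ≥ τ] · E[{log((1+τP)/(1+γe P))}^+] > 0`: a 1-bit feedback
scheme achieves a strictly positive secrecy rate. -/
theorem stmt_11 {Ω : Type*} [MeasurableSpace Ω] (μ : Measure Ω) [IsProbabilityMeasure μ]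
    (γ γe : Ω → ℝ) (hγm : Measurable γ) (hγem : Measurable γe)
    (hγ0 : ∀ ω, 0 ≤ γ ω) (hγe0 : ∀ ω, 0 ≤ γe ω)
    (hind : IndepFun γ γe μ)
    (hcont : ∀ t : ℝ, μ {ω | γ ω = t} = 0)
    (hpos : 0 < μ {ω | γe ω < γ ω}) :
    ∃ τ > (0 : ℝ), ∃ P > (0 : ℝ),
      0 < (μ {ω | τ ≤ γ ω}).toReal *
        ∫ ω, max 0 (Real.log ((1 + τ * P) / (1 + γe ω * P))) ∂μ :=
  stmt_11_general μ γ γe hγem hγe0 hpos
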